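/- Let L be a C-loop. If for every z ∈ L the triple (R_z∘R_z, id, J∘R_z∘R_z∘J) is an autotopism of L, then z⁴ = e for all z ∈ L. -/
import Mathlib


theorem stmt {L : Type*} (mul : L → L → L) (e : L)
    (hid : ∀ x, mul e x = x ∧ mul x e = x)
    (hLbij : ∀ a, Function.Bijective (fun x => mul a x))
    (hRbij : ∀ a, Function.Bijective (fun x => mul x a))
    (hC : ∀ x y z, mul x (mul y (mul y z)) = mul (mul (mul x y) y) z)
    (inv : L → L)
    (hlip : ∀ x y, mul (inv x) (mul x y) = y)
    (hrip : ∀ x y, mul (mul y x) (inv x) = y)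
    (haut : ∀ z x y, mul (mul (mul x z) z) y =
      inv (mul (mul (inv (mul x y)) z) z)) :
    ∀ z, mul (mul (mul z z) z) z = e := by
  intro z
  have he : inv e = e := by
    have h := hrip e e
    rw [(hid e).1, (hid (inv e)).1] at h
    exact h
  have h1 : mul z z = inv (mul z z) := by
    have h := haut z e e
    rw [(hid e).1, he, (hid z).1, (hid (mul z z)).2] at h
    exact h
  have h2 : mul (mul z z) (mul z z) = e := by
    have h := hrip (mul z z) e
    rw [(hid (mul z z)).1, ← h1] at h
    exact h
  have h3 := hC e z (mul z z)
  rw [(hid (mul z (mul z (mul z z)))).1, (hid z).1, h2] at h3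
  have h4 := hC z z z
  rw [← h4, h3]
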